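/- If at some step i of a congruence enumeration for ρ the word graph Γᵢ is complete, then the enumeration terminates at some step j ≥ i, i.e. there is j ≥ i such that applying any of TC1, TC2, TC3 to (Γⱼ, κⱼ) leaves it unchanged. -/
import Mathlib


namespace TC

/-- A word graph over the alphabet `A`: a set of nodes (natural numbers) and
labelled edges. -/
structure WordGraph (A : Type*) where
  nodes : Set ℕ
  edges : Set (ℕ × A × ℕ)

namespace WordGraph

variable {A : Type*}

/-- The conditions for `Γ` to really be a word graph: finitely many nodes,
`0` is a node, and the source and target of every edge are nodes. -/
def Valid (Γ : WordGraph A) : Prop :=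
  Γ.nodes.Finite ∧ 0 ∈ Γ.nodes ∧
    ∀ e ∈ Γ.edges, e.1 ∈ Γ.nodes ∧ e.2.2 ∈ Γ.nodes

/-- `IsPath Γ α w β` means that the word `w` labels an `(α, β)`-path in `Γ`. -/
inductive IsPath (Γ : WordGraph A) : ℕ → List A → ℕ → Prop
  | nil {α : ℕ} : α ∈ Γ.nodes → IsPath Γ α [] α
  | cons {α β γ : ℕ} {a : A} {w : List A} :
      (α, a, β) ∈ Γ.edges → IsPath Γ β w γ → IsPath Γ α (a :: w) γ

/-- A path recorded together with the list of successive targets of its edges. -/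
inductive PathVia (Γ : WordGraph A) : ℕ → List A → List ℕ → Prop
  | nil {α : ℕ} : α ∈ Γ.nodes → PathVia Γ α [] []
  | cons {α β : ℕ} {a : A} {w : List A} {γs : List ℕ} :
      (α, a, β) ∈ Γ.edges → PathVia Γ β w γs → PathVia Γ α (a :: w) (β :: γs)

/-- The path relation `(α)π_Γ`. -/
def pathRel (Γ : WordGraph A) (α : ℕ) : Set (List A × List A) :=
  {p | ∃ β : ℕ, Γ.IsPath α p.1 β ∧ Γ.IsPath α p.2 β}

def Deterministic (Γ : WordGraph A) : Prop :=
  ∀ ⦃α : ℕ⦄ ⦃a : A⦄ ⦃β γ : ℕ⦄, (α, a, β) ∈ Γ.edges → (α, a, γ) ∈ Γ.edges → β = γ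

def Complete (Γ : WordGraph A) : Prop :=
  ∀ α ∈ Γ.nodes, ∀ a : A, ∃ β : ℕ, (α, a, β) ∈ Γ.edges

def Compatible (Γ : WordGraph A) (W : Set (List A × List A)) : Prop :=
  ∀ α ∈ Γ.nodes, W ⊆ Γ.pathRel α

end WordGraph

/-- `min (α/κ)`: the minimum element of the `κ`-class of `α` inside `N`. -/
noncomputable def classMin (N : Set ℕ) (κ : ℕ → ℕ → Prop) (α : ℕ) : ℕ :=
  sInf {β : ℕ | β ∈ N ∧ κ α β}

/-- The quotient of a word graph by an equivalence relation on its nodes. -/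
def WordGraph.quot {A : Type*} (Γ : WordGraph A) (κ : ℕ → ℕ → Prop) : WordGraph A where
  nodes := classMin Γ.nodes κ '' Γ.nodes
  edges := {e : ℕ × A × ℕ | ∃ p ∈ Γ.edges,
      e = (classMin Γ.nodes κ p.1, p.2.1, classMin Γ.nodes κ p.2.2)}

/-- `κ` is an equivalence relation on the set `N` (represented as a relation on `ℕ`
whose related elements lie in `N`). -/
def IsEquivOn (N : Set ℕ) (κ : ℕ → ℕ → Prop) : Prop :=
  (∀ ⦃x y : ℕ⦄, κ x y → x ∈ N ∧ y ∈ N) ∧ (∀ x ∈ N, κ x x) ∧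
    (∀ ⦃x y : ℕ⦄, κ x y → κ y x) ∧ (∀ ⦃x y z : ℕ⦄, κ x y → κ y z → κ x z)

/-- `κ` is the trivial equivalence (the diagonal) on `N`. -/
def TrivialOn (N : Set ℕ) (κ : ℕ → ℕ → Prop) : Prop :=
  ∀ x y : ℕ, κ x y ↔ (x = y ∧ x ∈ N)

/-- `κ` is the least equivalence relation on `N` containing `base`. -/
def LeastEquivOn (N : Set ℕ) (base κ : ℕ → ℕ → Prop) : Prop :=
  IsEquivOn N κ ∧ (∀ ⦃x y : ℕ⦄, base x y → κ x y) ∧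
    ∀ σ : ℕ → ℕ → Prop, IsEquivOn N σ → (∀ ⦃x y : ℕ⦄, base x y → σ x y) →
      ∀ ⦃x y : ℕ⦄, κ x y → σ x y

section congruences

variable {A : Type*}

def IsCongruence (σ : List A → List A → Prop) : Prop :=
  Equivalence σ ∧ (∀ u v w : List A, σ u v → σ (u ++ w) (v ++ w)) ∧
    (∀ u v w : List A, σ u v → σ (w ++ u) (w ++ v))

def IsRightCongruence (σ : List A → List A → Prop) : Prop :=
  Equivalence σ ∧ ∀ u v w : List A, σ u v → σ (u ++ w) (v ++ w)

def IsLeftCongruence (σ : List A → List A → Prop) : Prop :=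
  Equivalence σ ∧ ∀ u v w : List A, σ u v → σ (w ++ u) (w ++ v)

def IsLeastCongruenceContaining (X : Set (List A × List A))
    (σ : List A → List A → Prop) : Prop :=
  IsCongruence σ ∧ (∀ p ∈ X, σ p.1 p.2) ∧
    ∀ τ : List A → List A → Prop, IsCongruence τ → (∀ p ∈ X, τ p.1 p.2) →
      ∀ u v : List A, σ u v → τ u v

def IsLeastRightCongruenceContaining (X : Set (List A × List A))
    (σ : List A → List A → Prop) : Prop :=
  IsRightCongruence σ ∧ (∀ p ∈ X, σ p.1 p.2) ∧
    ∀ τ : List A → List A → Prop, IsRightCongruence τ → (∀ p ∈ X, τ p.1 p.2) →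
      ∀ u v : List A, σ u v → τ u v

def IsLeastLeftCongruenceContaining (X : Set (List A × List A))
    (σ : List A → List A → Prop) : Prop :=
  IsLeftCongruence σ ∧ (∀ p ∈ X, σ p.1 p.2) ∧
    ∀ τ : List A → List A → Prop, IsLeftCongruence τ → (∀ p ∈ X, τ p.1 p.2) →
      ∀ u v : List A, σ u v → τ u v

end congruences

section steps

variable {A : Type*}

/-- Step TC1 with the new node `fresh`: define a new node together with a new
edge `(α, a, fresh)` where `α` had no edge labelled by `a`. -/
def TC1 (fresh : ℕ) (Γ : WordGraph A) (κ : ℕ → ℕ → Prop)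
    (Γ' : WordGraph A) (κ' : ℕ → ℕ → Prop) : Prop :=
  ∃ (α : ℕ) (a : A), α ∈ Γ.nodes ∧ (∀ β : ℕ, (α, a, β) ∉ Γ.edges) ∧
    Γ'.nodes = insert fresh Γ.nodes ∧
    Γ'.edges = insert (α, a, fresh) Γ.edges ∧
    ∀ x y : ℕ, κ' x y ↔ (κ x y ∨ (x = fresh ∧ y = fresh))

/-- Step TC1 applied at the specific node `α₀`. -/
def TC1At (α₀ fresh : ℕ) (Γ : WordGraph A) (κ : ℕ → ℕ → Prop)
    (Γ' : WordGraph A) (κ' : ℕ → ℕ → Prop) : Prop :=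
  ∃ a : A, α₀ ∈ Γ.nodes ∧ (∀ β : ℕ, (α₀, a, β) ∉ Γ.edges) ∧
    Γ'.nodes = insert fresh Γ.nodes ∧
    Γ'.edges = insert (α₀, a, fresh) Γ.edges ∧
    ∀ x y : ℕ, κ' x y ↔ (κ x y ∨ (x = fresh ∧ y = fresh))

/-- Step TC2, applied with a relation `(u, v) ∈ W` at a node belonging to `allowed`;
the three mutually exclusive cases (a), (b), (c) appear as the three disjuncts. -/
def TC2 (W : Set (List A × List A)) (allowed : Set ℕ)
    (Γ : WordGraph A) (κ : ℕ → ℕ → Prop)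
    (Γ' : WordGraph A) (κ' : ℕ → ℕ → Prop) : Prop :=
  ∃ (α : ℕ) (u v : List A), α ∈ allowed ∧ α ∈ Γ.nodes ∧ (u, v) ∈ W ∧
    u ≠ [] ∧ v ≠ [] ∧
    ((∃ (v₁ : List A) (b : A) (β γ : ℕ), v = v₁ ++ [b] ∧
        Γ.IsPath α u β ∧ Γ.IsPath α v₁ γ ∧ (∀ δ : ℕ, (γ, b, δ) ∉ Γ.edges) ∧
        Γ'.nodes = Γ.nodes ∧ Γ'.edges = insert (γ, b, β) Γ.edges ∧
        (∀ x y : ℕ, κ' x y ↔ κ x y)) ∨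
      (∃ (u₁ : List A) (a : A) (β γ : ℕ), u = u₁ ++ [a] ∧
        Γ.IsPath α u₁ β ∧ Γ.IsPath α v γ ∧ (∀ δ : ℕ, (β, a, δ) ∉ Γ.edges) ∧
        Γ'.nodes = Γ.nodes ∧ Γ'.edges = insert (β, a, γ) Γ.edges ∧
        (∀ x y : ℕ, κ' x y ↔ κ x y)) ∨
      (∃ β γ : ℕ, Γ.IsPath α u β ∧ Γ.IsPath α v γ ∧ β ≠ γ ∧
        Γ' = Γ ∧
        LeastEquivOn Γ.nodes (fun x y => κ x y ∨ (x = β ∧ y = γ)) κ'))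

/-- Step TC3: replace `Γ` by its quotient by `κ`, and replace `κ` by the least
equivalence generated by the remaining non-deterministic pairs of edges. -/
def TC3 (Γ : WordGraph A) (κ : ℕ → ℕ → Prop)
    (Γ' : WordGraph A) (κ' : ℕ → ℕ → Prop) : Prop :=
  Γ' = Γ.quot κ ∧
    LeastEquivOn Γ'.nodes
      (fun β γ => β ≠ γ ∧ ∃ (α : ℕ) (a : A), (α, a, β) ∈ Γ'.edges ∧ (α, a, γ) ∈ Γ'.edges)
      κ'

end steps

/-- A run of the Todd–Coxeter process: a sequence of word graphs together with
equivalence relations on their node sets. -/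
structure Run (A : Type*) where
  graph : ℕ → WordGraph A
  kappa : ℕ → ℕ → ℕ → Prop

namespace Run

variable {A : Type*}

/-- All nodes used up to and including step `i`. -/
def used (run : Run A) (i : ℕ) : Set ℕ :=
  ⋃ j ∈ Set.Iic i, (run.graph j).nodes

/-- The new node introduced by TC1 at step `i`: one plus the maximum of all
nodes used so far. -/
noncomputable def fresh (run : Run A) (i : ℕ) : ℕ :=
  sSup (run.used i) + 1

/-- Step `i` of a run is an application of TC1, of TC2 (with a relation of `R`
at any node, or with a relation of `S` at the node `0`), or of TC3. -/
def Step (R S : Set (List A × List A)) (run : Run A) (i : ℕ) : Prop :=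
  TC1 (run.fresh i) (run.graph i) (run.kappa i) (run.graph (i+1)) (run.kappa (i+1)) ∨
  TC2 R Set.univ (run.graph i) (run.kappa i) (run.graph (i+1)) (run.kappa (i+1)) ∨
  TC2 S {0} (run.graph i) (run.kappa i) (run.graph (i+1)) (run.kappa (i+1)) ∨
  TC3 (run.graph i) (run.kappa i) (run.graph (i+1)) (run.kappa (i+1))

end Run

/-- A congruence enumeration for the least right congruence `ρ` containing
`R^# ∪ S`, with input `(run.graph 0, run.kappa 0)`. -/
structure IsEnumeration {A : Type*} (R S : Set (List A × List A))
    (ρ : List A → List A → Prop) (run : Run A) : Prop where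
  valid : (run.graph 0).Valid
  init_pathRel : ∀ p ∈ (run.graph 0).pathRel 0, ρ p.1 p.2
  init_kappa : TrivialOn (run.graph 0).nodes (run.kappa 0)
  steps : ∀ i : ℕ, run.Step R S i
  init_S : ∃ m : ℕ, ∀ p ∈ S, ∃ β γ : ℕ, (run.graph m).IsPath 0 p.1 β ∧
      (run.graph m).IsPath 0 p.2 γ ∧ (β = γ ∨ run.kappa m β γ)
  fair_c : ∀ i : ℕ, ∀ α ∈ (run.graph i).nodes, ∀ a : A,
      (∀ β : ℕ, (α, a, β) ∉ (run.graph i).edges) →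
      ∃ j : ℕ, i ≤ j ∧ (α ∉ (run.graph j).nodes ∨ ∃ β : ℕ, (α, a, β) ∈ (run.graph j).edges)
  fair_d : ∀ i : ℕ, ∀ α ∈ (run.graph i).nodes, ∀ p ∈ R,
      ∃ j : ℕ, i ≤ j ∧ (α ∉ (run.graph j).nodes ∨ p ∈ (run.graph j).pathRel α)
  fair_e : ∀ i : ℕ, ¬ TrivialOn (run.graph i).nodes (run.kappa i) →
      ∃ j : ℕ, i ≤ j ∧ TrivialOn (run.graph j).nodes (run.kappa j)

/-- The enumeration has terminated at step `i`: applying any of TC1, TC2, TC3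
to `(Γᵢ, κᵢ)` results in no change. -/
def TerminatedAt {A : Type*} (R S : Set (List A × List A)) (run : Run A) (i : ℕ) : Prop :=
  ∀ (Γ' : WordGraph A) (κ' : ℕ → ℕ → Prop),
    (TC1 (run.fresh i) (run.graph i) (run.kappa i) Γ' κ' ∨
      TC2 R Set.univ (run.graph i) (run.kappa i) Γ' κ' ∨
      TC2 S {0} (run.graph i) (run.kappa i) Γ' κ' ∨
      TC3 (run.graph i) (run.kappa i) Γ' κ') →
    Γ' = run.graph i ∧ ∀ x y : ℕ, κ' x y ↔ run.kappa i x y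

section aux

variable {A : Type*}

open WordGraph

lemma isPath_target_mem {Γ : WordGraph A} (hv : Γ.Valid) {α : ℕ} {w : List A} {β : ℕ}
    (h : Γ.IsPath α w β) : β ∈ Γ.nodes := by
  induction h with
  | nil h => exact h
  | cons he _ ih => exact ih

lemma isPath_mono {Γ Γ' : WordGraph A} (hn : Γ.nodes ⊆ Γ'.nodes) (he : Γ.edges ⊆ Γ'.edges)
    {α : ℕ} {w : List A} {β : ℕ} (h : Γ.IsPath α w β) : Γ'.IsPath α w β := by
  induction h with
  | nil h => exact .nil (hn h)
  | cons hE _ ih => exact .cons (he hE) ih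

lemma isPath_unique {Γ : WordGraph A} (hdet : Γ.Deterministic) {w : List A} {α β γ : ℕ}
    (h1 : Γ.IsPath α w β) (h2 : Γ.IsPath α w γ) : β = γ := by
  induction w generalizing α with
  | nil => cases h1; cases h2; rfl
  | cons a w ih =>
    cases h1 with
    | cons he1 hp1 =>
      cases h2 with
      | cons he2 hp2 =>
        have := hdet he1 he2
        subst this
        exact ih hp1 hp2

lemma trivialOn_isEquivOn {N : Set ℕ} {κ : ℕ → ℕ → Prop} (h : TrivialOn N κ) :
    IsEquivOn N κ := by
  refine ⟨fun x y hxy => ?_, fun x hx => ?_, fun x y hxy => ?_, fun x y z hxy hyz => ?_⟩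
  · obtain ⟨rfl, hx⟩ := (h x y).1 hxy; exact ⟨hx, hx⟩
  · exact (h x x).2 ⟨rfl, hx⟩
  · obtain ⟨rfl, hx⟩ := (h x y).1 hxy; exact hxy
  · obtain ⟨rfl, hx⟩ := (h x y).1 hxy; exact hyz

lemma not_trivialOn_iff {N : Set ℕ} {κ : ℕ → ℕ → Prop} (hE : IsEquivOn N κ) :
    ¬ TrivialOn N κ ↔ ∃ x y, x ≠ y ∧ κ x y := by
  constructor
  · intro h
    by_contra hc
    push_neg at hc
    apply h
    intro x y
    constructor
    · intro hxy
      rcases eq_or_ne x y with rfl | hne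
      · exact ⟨rfl, (hE.1 hxy).1⟩
      · exact absurd hxy (hc x y hne)
    · rintro ⟨rfl, hx⟩
      exact hE.2.1 x hx
  · rintro ⟨x, y, hne, hxy⟩ ht
    exact hne ((ht x y).1 hxy).1

lemma classMin_spec {N : Set ℕ} {κ : ℕ → ℕ → Prop} (hE : IsEquivOn N κ) {z : ℕ}
    (hz : z ∈ N) : classMin N κ z ∈ N ∧ κ z (classMin N κ z) := by
  have : z ∈ {β : ℕ | β ∈ N ∧ κ z β} := ⟨hz, hE.2.1 z hz⟩
  exact Nat.sInf_mem ⟨z, this⟩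

lemma classMin_le {N : Set ℕ} {κ : ℕ → ℕ → Prop} {z w : ℕ}
    (hw : w ∈ N) (h : κ z w) : classMin N κ z ≤ w :=
  Nat.sInf_le ⟨hw, h⟩

lemma classMin_eq_of_rel {N : Set ℕ} {κ : ℕ → ℕ → Prop} (hE : IsEquivOn N κ) {x y : ℕ}
    (h : κ x y) : classMin N κ x = classMin N κ y := by
  unfold classMin
  congr 1
  ext β
  exact ⟨fun hb => ⟨hb.1, hE.2.2.2 (hE.2.2.1 h) hb.2⟩, fun hb => ⟨hb.1, hE.2.2.2 h hb.2⟩⟩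

lemma classMin_trivial {N : Set ℕ} {κ : ℕ → ℕ → Prop} (h : TrivialOn N κ) {z : ℕ}
    (hz : z ∈ N) : classMin N κ z = z := by
  have hs := classMin_spec (trivialOn_isEquivOn h) hz
  exact (((h z _).1 hs.2).1).symm

lemma WordGraph.ext' {Γ Δ : WordGraph A} (hn : Γ.nodes = Δ.nodes)
    (he : Γ.edges = Δ.edges) : Γ = Δ := by
  cases Γ; cases Δ; cases hn; cases he; rfl

lemma quot_trivial {Γ : WordGraph A} {κ : ℕ → ℕ → Prop} (hv : Γ.Valid)
    (h : TrivialOn Γ.nodes κ) : Γ.quot κ = Γ := by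
  obtain ⟨hfin, h0, hvE⟩ := hv
  have himg : ∀ z ∈ Γ.nodes, classMin Γ.nodes κ z = z := fun z hz => classMin_trivial h hz
  apply WordGraph.ext'
  · apply Set.Subset.antisymm
    · rintro z ⟨w, hw, rfl⟩
      show classMin Γ.nodes κ w ∈ Γ.nodes
      rw [himg w hw]; exact hw
    · intro z hz; exact ⟨z, hz, himg z hz⟩
  · apply Set.Subset.antisymm
    · rintro e ⟨p, hp, rfl⟩
      have := hvE p hp
      show (classMin Γ.nodes κ p.1, p.2.1, classMin Γ.nodes κ p.2.2) ∈ Γ.edges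
      rw [himg p.1 this.1, himg p.2.2 this.2]
      exact hp
    · intro e he
      have := hvE e he
      exact ⟨e, he, by rw [himg e.1 this.1, himg e.2.2 this.2]⟩

lemma isPath_quot {Γ : WordGraph A} {κ : ℕ → ℕ → Prop}
    {α : ℕ} {w : List A} {β : ℕ} (h : Γ.IsPath α w β) :
    (Γ.quot κ).IsPath (classMin Γ.nodes κ α) w (classMin Γ.nodes κ β) := by
  induction h with
  | nil hα => exact .nil ⟨_, hα, rfl⟩
  | @cons α' β' γ' a w' hE _ ih =>
    exact .cons (show _ ∈ (Γ.quot κ).edges from ⟨(α', a, β'), hE, rfl⟩) ih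

lemma quot_complete {Γ : WordGraph A} {κ : ℕ → ℕ → Prop} (hc : Γ.Complete) :
    (Γ.quot κ).Complete := by
  rintro α' ⟨α, hα, rfl⟩ a
  obtain ⟨β, hβ⟩ := hc α hα a
  exact ⟨classMin Γ.nodes κ β, ⟨(α, a, β), hβ, rfl⟩⟩

lemma quot_nodes_subset {Γ : WordGraph A} {κ : ℕ → ℕ → Prop}
    (hE : IsEquivOn Γ.nodes κ) : (Γ.quot κ).nodes ⊆ Γ.nodes := by
  rintro z ⟨w, hw, rfl⟩
  exact (classMin_spec hE hw).1

lemma quot_valid {Γ : WordGraph A} {κ : ℕ → ℕ → Prop} (hv : Γ.Valid)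
    (hE : IsEquivOn Γ.nodes κ) : (Γ.quot κ).Valid := by
  obtain ⟨hfin, h0, hvE⟩ := hv
  refine ⟨hfin.subset (quot_nodes_subset hE), ?_, ?_⟩
  · have h00 : classMin Γ.nodes κ 0 = 0 :=
      Nat.le_zero.mp (classMin_le h0 (hE.2.1 0 h0))
    exact ⟨0, h0, h00⟩
  · rintro e ⟨p, hp, rfl⟩
    have := hvE p hp
    exact ⟨⟨p.1, this.1, rfl⟩, ⟨p.2.2, this.2, rfl⟩⟩

end aux
section steplemmas

variable {A : Type*}

open WordGraph

lemma quot_ssubset_of_lt {Γ : WordGraph A} {κ : ℕ → ℕ → Prop}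
    (hE : IsEquivOn Γ.nodes κ) {x y : ℕ} (hxy : x < y) (hκ : κ x y) :
    (Γ.quot κ).nodes ⊂ Γ.nodes := by
  refine Set.ssubset_iff_of_subset (quot_nodes_subset hE) |>.mpr ⟨y, (hE.1 hκ).2, ?_⟩
  rintro ⟨z, hz, hcz⟩
  have hzy : κ z y := by
    have := (classMin_spec hE hz).2
    rwa [hcz] at this
  have h1 : classMin Γ.nodes κ z = classMin Γ.nodes κ y := classMin_eq_of_rel hE hzy
  have h2 : classMin Γ.nodes κ y ≤ x := classMin_le (hE.1 hκ).1 (hE.2.2.1 hκ)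
  omega

lemma quot_ssubset {Γ : WordGraph A} {κ : ℕ → ℕ → Prop}
    (hE : IsEquivOn Γ.nodes κ) {x y : ℕ} (hne : x ≠ y) (hκ : κ x y) :
    (Γ.quot κ).nodes ⊂ Γ.nodes := by
  rcases lt_or_gt_of_ne hne with h | h
  · exact quot_ssubset_of_lt hE h hκ
  · exact quot_ssubset_of_lt hE h (hE.2.2.1 hκ)

lemma TC1_preserves {f : ℕ} {Γ Γ' : WordGraph A} {κ κ' : ℕ → ℕ → Prop}
    (h : TC1 f Γ κ Γ' κ') (hv : Γ.Valid) (hE : IsEquivOn Γ.nodes κ) :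
    Γ'.Valid ∧ IsEquivOn Γ'.nodes κ' ∧ (∀ x y, κ x y → κ' x y) ∧
      Γ.nodes ⊆ Γ'.nodes ∧ Γ.edges ⊆ Γ'.edges := by
  obtain ⟨α, a, hα, hno, hn, he, hκ'⟩ := h
  obtain ⟨hfin, h0, hvE⟩ := hv
  have hsubn : Γ.nodes ⊆ Γ'.nodes := by rw [hn]; exact Set.subset_insert _ _
  refine ⟨⟨?_, hsubn h0, ?_⟩, ⟨?_, ?_, ?_, ?_⟩, ?_, hsubn, ?_⟩
  · rw [hn]; exact hfin.insert f
  · intro e he'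
    rw [he] at he'
    rcases he' with rfl | he'
    · exact ⟨hsubn hα, by rw [hn]; exact Set.mem_insert _ _⟩
    · exact ⟨hsubn (hvE e he').1, hsubn (hvE e he').2⟩
  · intro x y hxy
    rcases (hκ' x y).1 hxy with h | ⟨rfl, rfl⟩
    · exact ⟨hsubn (hE.1 h).1, hsubn (hE.1 h).2⟩
    · constructor <;> (rw [hn]; exact Set.mem_insert _ _)
  · intro x hx
    rw [hn] at hx
    rcases hx with rfl | hx
    · exact (hκ' x x).2 (Or.inr ⟨rfl, rfl⟩)
    · exact (hκ' x x).2 (Or.inl (hE.2.1 x hx))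
  · intro x y hxy
    rcases (hκ' x y).1 hxy with h | ⟨rfl, rfl⟩
    · exact (hκ' y x).2 (Or.inl (hE.2.2.1 h))
    · exact hxy
  · intro x y z hxy hyz
    rcases (hκ' x y).1 hxy with h1 | ⟨rfl, rfl⟩ <;>
      rcases (hκ' y z).1 hyz with h2 | h2
    · exact (hκ' x z).2 (Or.inl (hE.2.2.2 h1 h2))
    · obtain ⟨rfl, rfl⟩ := h2; exact hxy
    · exact hyz
    · exact hyz
  · intro x y h; exact (hκ' x y).2 (Or.inl h)
  · rw [he]; exact Set.subset_insert _ _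

lemma TC2_preserves {W : Set (List A × List A)} {allowed : Set ℕ}
    {Γ Γ' : WordGraph A} {κ κ' : ℕ → ℕ → Prop}
    (h : TC2 W allowed Γ κ Γ' κ') (hv : Γ.Valid) (hE : IsEquivOn Γ.nodes κ) :
    Γ'.Valid ∧ IsEquivOn Γ'.nodes κ' ∧ (∀ x y, κ x y → κ' x y) ∧
      Γ.nodes ⊆ Γ'.nodes ∧ Γ'.nodes = Γ.nodes := by
  obtain ⟨α, u, v, hall, hα, hW, hu, hv', hcase⟩ := h
  obtain ⟨hfin, h0, hvE⟩ := hv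
  rcases hcase with ⟨v₁, b, β, γ, hveq, hpu, hpv, hno, hn, he, hκ'⟩ |
    ⟨u₁, a, β, γ, hueq, hpu, hpv, hno, hn, he, hκ'⟩ | ⟨β, γ, hpu, hpv, hne, hΓ, hle⟩
  · have hβ : β ∈ Γ.nodes := isPath_target_mem ⟨hfin, h0, hvE⟩ hpu
    have hγ : γ ∈ Γ.nodes := isPath_target_mem ⟨hfin, h0, hvE⟩ hpv
    have hEq : ∀ x y, κ' x y ↔ κ x y := hκ'
    refine ⟨⟨by rw [hn]; exact hfin, by rw [hn]; exact h0, ?_⟩, ?_, ?_, by rw [hn], hn⟩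
    · intro e he'
      rw [he] at he'
      rw [hn]
      rcases he' with rfl | he'
      · exact ⟨hγ, hβ⟩
      · exact hvE e he'
    · rw [hn]
      exact ⟨fun x y hxy => hE.1 ((hEq x y).1 hxy),
        fun x hx => (hEq x x).2 (hE.2.1 x hx),
        fun x y hxy => (hEq y x).2 (hE.2.2.1 ((hEq x y).1 hxy)),
        fun x y z hxy hyz => (hEq x z).2 (hE.2.2.2 ((hEq x y).1 hxy) ((hEq y z).1 hyz))⟩
    · intro x y hxy; exact (hEq x y).2 hxy
  · have hβ : β ∈ Γ.nodes := isPath_target_mem ⟨hfin, h0, hvE⟩ hpu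
    have hγ : γ ∈ Γ.nodes := isPath_target_mem ⟨hfin, h0, hvE⟩ hpv
    have hEq : ∀ x y, κ' x y ↔ κ x y := hκ'
    refine ⟨⟨by rw [hn]; exact hfin, by rw [hn]; exact h0, ?_⟩, ?_, ?_, by rw [hn], hn⟩
    · intro e he'
      rw [he] at he'
      rw [hn]
      rcases he' with rfl | he'
      · exact ⟨hβ, hγ⟩
      · exact hvE e he'
    · rw [hn]
      exact ⟨fun x y hxy => hE.1 ((hEq x y).1 hxy),
        fun x hx => (hEq x x).2 (hE.2.1 x hx),
        fun x y hxy => (hEq y x).2 (hE.2.2.1 ((hEq x y).1 hxy)),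
        fun x y z hxy hyz => (hEq x z).2 (hE.2.2.2 ((hEq x y).1 hxy) ((hEq y z).1 hyz))⟩
    · intro x y hxy; exact (hEq x y).2 hxy
  · subst hΓ
    exact ⟨⟨hfin, h0, hvE⟩, hle.1, fun x y hxy => hle.2.1 (Or.inl hxy),
      le_refl _, rfl⟩

lemma TC3_preserves {Γ Γ' : WordGraph A} {κ κ' : ℕ → ℕ → Prop}
    (h : TC3 Γ κ Γ' κ') (hv : Γ.Valid) (hE : IsEquivOn Γ.nodes κ) :
    Γ'.Valid ∧ IsEquivOn Γ'.nodes κ' ∧ Γ'.nodes ⊆ Γ.nodes := by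
  obtain ⟨hΓ, hle⟩ := h
  subst hΓ
  exact ⟨quot_valid hv hE, hle.1, quot_nodes_subset hE⟩

lemma step_preserves {R S : Set (List A × List A)} {run : Run A} {k : ℕ}
    (h : run.Step R S k) (hv : (run.graph k).Valid)
    (hE : IsEquivOn (run.graph k).nodes (run.kappa k)) :
    (run.graph (k+1)).Valid ∧ IsEquivOn (run.graph (k+1)).nodes (run.kappa (k+1)) := by
  rcases h with h | h | h | h
  · exact ⟨(TC1_preserves h hv hE).1, (TC1_preserves h hv hE).2.1⟩
  · exact ⟨(TC2_preserves h hv hE).1, (TC2_preserves h hv hE).2.1⟩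
  · exact ⟨(TC2_preserves h hv hE).1, (TC2_preserves h hv hE).2.1⟩
  · exact ⟨(TC3_preserves h hv hE).1, (TC3_preserves h hv hE).2.1⟩

end steplemmas
section mainlemmas

variable {A : Type*}

open WordGraph

lemma TC2_edges_subset {W : Set (List A × List A)} {allowed : Set ℕ}
    {Γ Γ' : WordGraph A} {κ κ' : ℕ → ℕ → Prop}
    (h : TC2 W allowed Γ κ Γ' κ') : Γ.edges ⊆ Γ'.edges := by
  obtain ⟨α, u, v, hall, hα, hW, hu, hv', hcase⟩ := h
  rcases hcase with ⟨_, _, _, _, _, _, _, _, _, he, _⟩ |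
    ⟨_, _, _, _, _, _, _, _, _, he, _⟩ | ⟨_, _, _, _, _, hΓ, _⟩
  · rw [he]; exact Set.subset_insert _ _
  · rw [he]; exact Set.subset_insert _ _
  · rw [hΓ]

lemma step_complete_facts {R S : Set (List A × List A)} {run : Run A} {k : ℕ}
    (h : run.Step R S k) (hv : (run.graph k).Valid)
    (hE : IsEquivOn (run.graph k).nodes (run.kappa k))
    (hc : (run.graph k).Complete) :
    (run.graph (k+1)).Complete ∧ (run.graph (k+1)).nodes ⊆ (run.graph k).nodes ∧
      ((run.graph (k+1) = run.graph k ∧ ∃ β γ : ℕ, β ≠ γ ∧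
          LeastEquivOn (run.graph k).nodes
            (fun x y => run.kappa k x y ∨ (x = β ∧ y = γ)) (run.kappa (k+1))) ∨
        TC3 (run.graph k) (run.kappa k) (run.graph (k+1)) (run.kappa (k+1))) := by
  rcases h with h | h | h | h
  · obtain ⟨α, a, hα, hno, _⟩ := h
    obtain ⟨β, hβ⟩ := hc α hα a
    exact absurd hβ (hno β)
  · obtain ⟨α, u, v, hall, hα, hW, hu, hv', hcase⟩ := h
    rcases hcase with ⟨v₁, b, β, γ, hveq, hpu, hpv, hno, _⟩ |
      ⟨u₁, a, β, γ, hueq, hpu, hpv, hno, _⟩ | ⟨β, γ, hpu, hpv, hne, hΓ, hle⟩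
    · have hγ : γ ∈ (run.graph k).nodes := isPath_target_mem hv hpv
      obtain ⟨δ, hδ⟩ := hc γ hγ b
      exact absurd hδ (hno δ)
    · have hβ : β ∈ (run.graph k).nodes := isPath_target_mem hv hpu
      obtain ⟨δ, hδ⟩ := hc β hβ a
      exact absurd hδ (hno δ)
    · rw [hΓ]
      exact ⟨hc, le_refl _, Or.inl ⟨rfl, β, γ, hne, hle⟩⟩
  · obtain ⟨α, u, v, hall, hα, hW, hu, hv', hcase⟩ := h
    rcases hcase with ⟨v₁, b, β, γ, hveq, hpu, hpv, hno, _⟩ |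
      ⟨u₁, a, β, γ, hueq, hpu, hpv, hno, _⟩ | ⟨β, γ, hpu, hpv, hne, hΓ, hle⟩
    · have hγ : γ ∈ (run.graph k).nodes := isPath_target_mem hv hpv
      obtain ⟨δ, hδ⟩ := hc γ hγ b
      exact absurd hδ (hno δ)
    · have hβ : β ∈ (run.graph k).nodes := isPath_target_mem hv hpu
      obtain ⟨δ, hδ⟩ := hc β hβ a
      exact absurd hδ (hno δ)
    · rw [hΓ]
      exact ⟨hc, le_refl _, Or.inl ⟨rfl, β, γ, hne, hle⟩⟩
  · refine ⟨?_, ?_, Or.inr h⟩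
    · rw [h.1]; exact quot_complete hc
    · rw [h.1]; exact quot_nodes_subset hE

lemma step_pathpair {R S : Set (List A × List A)} {run : Run A} {k : ℕ}
    (h : run.Step R S k) (hv : (run.graph k).Valid)
    (hE : IsEquivOn (run.graph k).nodes (run.kappa k))
    {u v : List A} {β γ : ℕ}
    (hpu : (run.graph k).IsPath 0 u β) (hpv : (run.graph k).IsPath 0 v γ)
    (hbg : β = γ ∨ run.kappa k β γ) :
    ∃ β' γ' : ℕ, (run.graph (k+1)).IsPath 0 u β' ∧ (run.graph (k+1)).IsPath 0 v γ' ∧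
      (β' = γ' ∨ run.kappa (k+1) β' γ') := by
  rcases h with h | h | h | h
  · obtain ⟨_, _, hκm, hns, hes⟩ := TC1_preserves h hv hE
    exact ⟨β, γ, isPath_mono hns hes hpu, isPath_mono hns hes hpv,
      hbg.imp id (hκm β γ)⟩
  · obtain ⟨_, _, hκm, hns, _⟩ := TC2_preserves h hv hE
    have hes := TC2_edges_subset h
    exact ⟨β, γ, isPath_mono hns hes hpu, isPath_mono hns hes hpv,
      hbg.imp id (hκm β γ)⟩
  · obtain ⟨_, _, hκm, hns, _⟩ := TC2_preserves h hv hE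
    have hes := TC2_edges_subset h
    exact ⟨β, γ, isPath_mono hns hes hpu, isPath_mono hns hes hpv,
      hbg.imp id (hκm β γ)⟩
  · obtain ⟨hΓ, hle⟩ := h
    have h0 : (0 : ℕ) ∈ (run.graph k).nodes := hv.2.1
    have hc0 : classMin (run.graph k).nodes (run.kappa k) 0 = 0 :=
      Nat.le_zero.mp (classMin_le h0 (hE.2.1 0 h0))
    refine ⟨classMin (run.graph k).nodes (run.kappa k) β,
      classMin (run.graph k).nodes (run.kappa k) γ, ?_, ?_, ?_⟩
    · rw [hΓ]; have := isPath_quot (κ := run.kappa k) hpu; rwa [hc0] at this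
    · rw [hΓ]; have := isPath_quot (κ := run.kappa k) hpv; rwa [hc0] at this
    · rcases hbg with rfl | hκ
      · exact Or.inl rfl
      · exact Or.inl (classMin_eq_of_rel hE hκ)

end mainlemmas
/-- If `Γᵢ` is complete at some step of a congruence enumeration,
then the enumeration terminates at some step `j ≥ i`. -/
theorem statement_11 {A : Type*} [Fintype A] (R S : Set (List A × List A))
    (hRfin : R.Finite) (hSfin : S.Finite)
    (Rsharp ρ : List A → List A → Prop)
    (hRsharp : IsLeastCongruenceContaining R Rsharp)
    (hρ : IsLeastRightCongruenceContaining ({p : List A × List A | Rsharp p.1 p.2} ∪ S) ρ)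
    (run : Run A) (henum : IsEnumeration R S ρ run) (i : ℕ)
    (hcomp : (run.graph i).Complete) :
    ∃ j : ℕ, i ≤ j ∧ TerminatedAt R S run j := by
  classical
  obtain ⟨m, hm⟩ := henum.init_S
  -- basic invariants
  have hinv : ∀ k, (run.graph k).Valid ∧ IsEquivOn (run.graph k).nodes (run.kappa k) := by
    intro k
    induction k with
    | zero => exact ⟨henum.valid, trivialOn_isEquivOn henum.init_kappa⟩
    | succ k ih => exact step_preserves (henum.steps k) ih.1 ih.2
  -- completeness propagates from step i
  have hC : ∀ k, i ≤ k → (run.graph k).Complete := by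
    intro k hk
    induction k, hk using Nat.le_induction with
    | base => exact hcomp
    | succ k hk ih =>
      exact (step_complete_facts (henum.steps k) (hinv k).1 (hinv k).2 ih).1
  -- node sets are decreasing from step i
  have hmono : ∀ k, i ≤ k → (run.graph (k+1)).nodes ⊆ (run.graph k).nodes := fun k hk =>
    (step_complete_facts (henum.steps k) (hinv k).1 (hinv k).2 (hC k hk)).2.1
  have hchain : ∀ k l, i ≤ k → k ≤ l → (run.graph l).nodes ⊆ (run.graph k).nodes := by
    intro k l hik hkl
    induction l, hkl using Nat.le_induction with
    | base => exact le_refl _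
    | succ l hkl ih => exact (hmono l (hik.trans hkl)).trans ih
  -- stabilization of the node set
  set f : ℕ → ℕ := fun k => (run.graph k).nodes.ncard with hf
  have hTne : {n : ℕ | ∃ k, i ≤ k ∧ f k = n}.Nonempty := ⟨f i, i, le_rfl, rfl⟩
  obtain ⟨j₁, hij₁, hfj₁⟩ := Nat.sInf_mem hTne
  have hstab : ∀ k, j₁ ≤ k → (run.graph k).nodes = (run.graph j₁).nodes := by
    intro k hk
    refine Set.eq_of_subset_of_ncard_le (hchain j₁ k hij₁ hk) ?_ (hinv j₁).1.1
    have : f j₁ ≤ f k := by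
      rw [hfj₁]
      exact Nat.sInf_le ⟨k, hij₁.trans hk, rfl⟩
    exact this
  -- the equivalence relation is trivial from step j₁ on
  have hntpres : ∀ k, j₁ ≤ k → ¬ TrivialOn (run.graph k).nodes (run.kappa k) →
      ¬ TrivialOn (run.graph (k+1)).nodes (run.kappa (k+1)) := by
    intro k hk hnt
    obtain ⟨x, y, hxy, hκ⟩ := (not_trivialOn_iff (hinv k).2).1 hnt
    rcases (step_complete_facts (henum.steps k) (hinv k).1 (hinv k).2
        (hC k (hij₁.trans hk))).2.2 with ⟨hgeq, β, γ, hne, hle⟩ | hTC3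
    · exact (not_trivialOn_iff (hinv (k+1)).2).2 ⟨x, y, hxy, hle.2.1 (Or.inl hκ)⟩
    · exfalso
      have hss : ((run.graph k).quot (run.kappa k)).nodes ⊂ (run.graph k).nodes :=
        quot_ssubset (hinv k).2 hxy hκ
      rw [← hTC3.1] at hss
      rw [hstab k hk, hstab (k+1) (hk.trans (Nat.le_succ k))] at hss
      exact hss.2 (le_refl _)
  have htriv : ∀ k, j₁ ≤ k → TrivialOn (run.graph k).nodes (run.kappa k) := by
    intro k hk
    by_contra hnt
    have hall : ∀ l, k ≤ l → ¬ TrivialOn (run.graph l).nodes (run.kappa l) := by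
      intro l hl
      induction l, hl using Nat.le_induction with
      | base => exact hnt
      | succ l hl ih => exact hntpres l (hk.trans hl) ih
    obtain ⟨j', hj', ht⟩ := henum.fair_e k hnt
    exact hall j' hj' ht
  -- from step j₁ on the graph is constant and deterministic
  have hstep3 : ∀ k, j₁ ≤ k →
      run.graph (k+1) = run.graph k ∧ (run.graph (k+1)).Deterministic := by
    intro k hk
    rcases (step_complete_facts (henum.steps k) (hinv k).1 (hinv k).2
        (hC k (hij₁.trans hk))).2.2 with ⟨hgeq, β, γ, hne, hle⟩ | hTC3
    · exfalso
      have hβγ : run.kappa (k+1) β γ := hle.2.1 (Or.inr ⟨rfl, rfl⟩)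
      exact hne ((htriv (k+1) (hk.trans (Nat.le_succ k)) β γ).1 hβγ).1
    · have hgeq : run.graph (k+1) = run.graph k := by
        rw [hTC3.1, quot_trivial (hinv k).1 (htriv k hk)]
      refine ⟨hgeq, ?_⟩
      intro α a β γ h1 h2
      by_contra hne
      have hbase : run.kappa (k+1) β γ :=
        hTC3.2.2.1 (x := β) (y := γ) ⟨hne, α, a, h1, h2⟩
      exact hne ((htriv (k+1) (hk.trans (Nat.le_succ k)) β γ).1 hbase).1
  have hgconst : ∀ k, j₁ ≤ k → run.graph k = run.graph j₁ := by
    intro k hk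
    induction k, hk using Nat.le_induction with
    | base => rfl
    | succ k hk ih => rw [(hstep3 k hk).1, ih]
  have hdet1 : (run.graph j₁).Deterministic := by
    obtain ⟨he, hd⟩ := hstep3 j₁ le_rfl
    rwa [he] at hd
  -- the chosen terminal step
  set j : ℕ := max j₁ m with hj
  have hj₁j : j₁ ≤ j := le_max_left _ _
  have hmj : m ≤ j := le_max_right _ _
  have hgj : run.graph j = run.graph j₁ := hgconst j hj₁j
  have hvj : (run.graph j).Valid := (hinv j).1
  have hcj : (run.graph j).Complete := hC j (hij₁.trans hj₁j)
  have htrivj : TrivialOn (run.graph j).nodes (run.kappa j) := htriv j hj₁j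
  have hdetj : (run.graph j).Deterministic := by rw [hgj]; exact hdet1
  -- compatibility with R
  have hRcomp : ∀ α ∈ (run.graph j).nodes, ∀ p ∈ R,
      ∃ δ : ℕ, (run.graph j).IsPath α p.1 δ ∧ (run.graph j).IsPath α p.2 δ := by
    intro α hα p hp
    obtain ⟨j', hj', hd⟩ := henum.fair_d j α hα p hp
    have hgj' : run.graph j' = run.graph j := by
      rw [hgconst j' (hj₁j.trans hj'), hgj]
    rcases hd with hd | hd
    · rw [hgj'] at hd; exact absurd hα hd
    · rw [hgj'] at hd; exact hd
  -- compatibility with S at node 0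
  have hSstep : ∀ k, m ≤ k → ∀ p ∈ S, ∃ β γ : ℕ, (run.graph k).IsPath 0 p.1 β ∧
      (run.graph k).IsPath 0 p.2 γ ∧ (β = γ ∨ run.kappa k β γ) := by
    intro k hk
    induction k, hk using Nat.le_induction with
    | base => exact hm
    | succ k hk ih =>
      intro p hp
      obtain ⟨β, γ, hpu, hpv, hbg⟩ := ih p hp
      exact step_pathpair (henum.steps k) (hinv k).1 (hinv k).2 hpu hpv hbg
  have hScomp : ∀ p ∈ S, ∃ δ : ℕ, (run.graph j).IsPath 0 p.1 δ ∧
      (run.graph j).IsPath 0 p.2 δ := by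
    intro p hp
    obtain ⟨β, γ, hpu, hpv, hbg⟩ := hSstep j hmj p hp
    rcases hbg with rfl | hκ
    · exact ⟨β, hpu, hpv⟩
    · obtain ⟨rfl, _⟩ := (htrivj β γ).1 hκ
      exact ⟨β, hpu, hpv⟩
  -- conclusion
  refine ⟨j, hij₁.trans hj₁j, ?_⟩
  intro Γ' κ' hstep
  rcases hstep with h1 | h2 | h2 | h3
  · obtain ⟨α, a, hα, hno, _⟩ := h1
    obtain ⟨β, hβ⟩ := hcj α hα a
    exact absurd hβ (hno β)
  · obtain ⟨α, u, v, hall, hα, hR, hu0, hv0, hcase⟩ := h2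
    rcases hcase with ⟨v₁, b, β, γ, hveq, hpu, hpv, hno, _⟩ |
      ⟨u₁, a, β, γ, hueq, hpu, hpv, hno, _⟩ | ⟨β, γ, hpu, hpv, hne, _, _⟩
    · have hγ : γ ∈ (run.graph j).nodes := isPath_target_mem hvj hpv
      obtain ⟨δ, hδ⟩ := hcj γ hγ b
      exact absurd hδ (hno δ)
    · have hβ : β ∈ (run.graph j).nodes := isPath_target_mem hvj hpu
      obtain ⟨δ, hδ⟩ := hcj β hβ a
      exact absurd hδ (hno δ)
    · obtain ⟨δ, hδu, hδv⟩ := hRcomp α hα (u, v) hR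
      have h1 : β = δ := isPath_unique hdetj hpu hδu
      have h2 : γ = δ := isPath_unique hdetj hpv hδv
      exact absurd (h1.trans h2.symm) hne
  · obtain ⟨α, u, v, hall, hα, hS, hu0, hv0, hcase⟩ := h2
    have hα0 : α = 0 := hall
    subst hα0
    rcases hcase with ⟨v₁, b, β, γ, hveq, hpu, hpv, hno, _⟩ |
      ⟨u₁, a, β, γ, hueq, hpu, hpv, hno, _⟩ | ⟨β, γ, hpu, hpv, hne, _, _⟩
    · have hγ : γ ∈ (run.graph j).nodes := isPath_target_mem hvj hpv
      obtain ⟨δ, hδ⟩ := hcj γ hγ b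
      exact absurd hδ (hno δ)
    · have hβ : β ∈ (run.graph j).nodes := isPath_target_mem hvj hpu
      obtain ⟨δ, hδ⟩ := hcj β hβ a
      exact absurd hδ (hno δ)
    · obtain ⟨δ, hδu, hδv⟩ := hScomp (u, v) hS
      have h1 : β = δ := isPath_unique hdetj hpu hδu
      have h2 : γ = δ := isPath_unique hdetj hpv hδv
      exact absurd (h1.trans h2.symm) hne
  · obtain ⟨hΓ', hle⟩ := h3
    have hqe : Γ' = run.graph j := by rw [hΓ', quot_trivial hvj htrivj]
    refine ⟨hqe, fun x y => ?_⟩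
    constructor
    · intro hxy
      have hσ : IsEquivOn Γ'.nodes (fun x y => x = y ∧ x ∈ Γ'.nodes) := by
        refine ⟨fun x y h => ⟨h.2, h.1 ▸ h.2⟩, fun x hx => ⟨rfl, hx⟩,
          fun x y h => ⟨h.1.symm, h.1 ▸ h.2⟩, fun x y z h h' => ⟨h.1.trans h'.1, h.2⟩⟩
      have hbase : ∀ ⦃x y : ℕ⦄,
          (x ≠ y ∧ ∃ (α : ℕ) (a : A), (α, a, x) ∈ Γ'.edges ∧ (α, a, y) ∈ Γ'.edges) →
          (x = y ∧ x ∈ Γ'.nodes) := by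
        rintro x y ⟨hne, α, a, h1, h2⟩
        rw [hqe] at h1 h2
        exact absurd (hdetj h1 h2) hne
      have := hle.2.2 _ hσ hbase hxy
      exact (htrivj x y).2 ⟨this.1, by rw [← hqe]; exact this.2⟩
    · intro hxy
      obtain ⟨rfl, hx⟩ := (htrivj x y).1 hxy
      exact hle.1.2.1 x (by rw [hqe]; exact hx)

end TC
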